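/- arXiv:1811.10406 — 2 statements merged into one kernel-verified Lean document; each statement's English description precedes it below -/
import Mathlib

section
/- Let V be a real vector space, g a symmetric bilinear form on V, and J : V → V a g-symmetric linear map with J² = p J + q I for real numbers p, q. Define Ĵ' : V ⊕ V* → V ⊕ V* by Ĵ'(X, α) := (−J X + p X, ♭_g(X) + J*(α)). Then Ĵ'² = p Ĵ' + q Id on V ⊕ V*. -/
/-!
Ĵ' is lower block-triangular on `V ⊕ V*`, with diagonal blocks `p - J` and `J*` and
off-diagonal block `♭_g`. Both diagonal blocks satisfy `x² = p x + q` (for `p - J` this is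
the other root of the same quadratic), and the off-diagonal block of the square,
`♭_g (p - J) + J* ♭_g`, reduces to `p ♭_g` because `g`-symmetry of `J` says `J* ♭_g = ♭_g J`.
-/

theorem sq_smul_one_sub_of_sq {R A : Type*} [CommRing R] [Ring A] [Algebra R A] {a : A}
    {p q : R} (ha : a ^ 2 = p • a + q • 1) :
    (p • 1 - a) ^ 2 = p • (p • 1 - a) + q • 1 := by
  rw [sq, sub_mul, mul_sub, mul_sub, ← sq a, ha]
  simp only [smul_mul_assoc, mul_smul_comm, one_mul, mul_one]
  module

namespace LinearMap

variable {R M N : Type*} [CommSemiring R] [AddCommMonoid M] [Module R M]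
  [AddCommMonoid N] [Module R N]

def lowerTriangular (A : Module.End R M) (B : M →ₗ[R] N) (D : Module.End R N) :
    Module.End R (M × N) :=
  (A ∘ₗ fst R M N).prod (B ∘ₗ fst R M N + D ∘ₗ snd R M N)

@[simp]
theorem lowerTriangular_apply (A : Module.End R M) (B : M →ₗ[R] N) (D : Module.End R N)
    (x : M × N) : lowerTriangular A B D x = (A x.1, B x.1 + D x.2) :=
  rfl

theorem lowerTriangular_sq {A : Module.End R M} {B : M →ₗ[R] N} {D : Module.End R N}
    {p q : R} (hA : A ^ 2 = p • A + q • 1) (hD : D ^ 2 = p • D + q • 1)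
    (hB : B ∘ₗ A + D ∘ₗ B = p • B) :
    lowerTriangular A B D ^ 2 = p • lowerTriangular A B D + q • 1 := by
  have hA' (x : M) : A (A x) = p • A x + q • x := by simpa [sq] using congr($hA x)
  have hD' (y : N) : D (D y) = p • D y + q • y := by simpa [sq] using congr($hD y)
  have hB' (x : M) : B (A x) + D (B x) = p • B x := congr($hB x)
  ext x <;> simp [sq, hA', hD', hB']

theorem dualMap_sq_of_sq {J : Module.End R M} {p q : R} (hJ : J ^ 2 = p • J + q • 1) :
    J.dualMap ^ 2 = p • J.dualMap + q • 1 := by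
  ext α x
  simpa [sq] using congr(α ($hJ x))

theorem IsAdjointPair.dualMap_comp {B : LinearMap.BilinForm R M} {J : Module.End R M}
    (h : IsAdjointPair B B J J) : J.dualMap ∘ₗ B = B ∘ₗ J :=
  (isAdjointPair_iff_comp_eq_compl₂.mp h).symm

end LinearMap

open LinearMap in
theorem generalized_metallic_prime_general
    (V : Type*) [AddCommGroup V] [Module ℝ V]
    (g : LinearMap.BilinForm ℝ V)
    (J : Module.End ℝ V)
    (hJsym : ∀ X Y : V, g (J X) Y = g X (J Y))
    (p q : ℝ) (hJ : J ^ 2 = p • J + q • (1 : Module.End ℝ V))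
    (Jhat' : V × Module.Dual ℝ V → V × Module.Dual ℝ V)
    (hJhat' : ∀ σ : V × Module.Dual ℝ V,
      Jhat' σ = (-(J σ.1) + p • σ.1, g σ.1 + σ.2 ∘ₗ (J : V →ₗ[ℝ] V))) :
    ∀ σ : V × Module.Dual ℝ V, Jhat' (Jhat' σ) = p • Jhat' σ + q • σ := by
  have hJhat'_eq : Jhat' = lowerTriangular (p • 1 - J) g J.dualMap := by
    funext σ
    rw [hJhat', lowerTriangular_apply, LinearMap.sub_apply, neg_add_eq_sub]
    rfl
  have hB : g ∘ₗ (p • 1 - J) + J.dualMap ∘ₗ g = p • g := by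
    rw [IsAdjointPair.dualMap_comp hJsym, comp_sub, comp_smul, Module.End.one_eq_id, comp_id]
    abel
  intro σ
  simpa [hJhat'_eq, sq] using
    congr($(lowerTriangular_sq (sq_smul_one_sub_of_sq hJ) (dualMap_sq_of_sq hJ) hB) σ)

/-- If `J` is `g`-symmetric with `J² = p J + q I`, then
`Ĵ'(X, α) := (-J X + p X, ♭_g X + J* α)` satisfies `Ĵ'² = p Ĵ' + q Id`. -/
theorem generalized_metallic_prime
    (V : Type*) [AddCommGroup V] [Module ℝ V]
    (g : LinearMap.BilinForm ℝ V) (hgsymm : ∀ X Y : V, g X Y = g Y X)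
    (J : Module.End ℝ V)
    (hJsym : ∀ X Y : V, g (J X) Y = g X (J Y))
    (p q : ℝ) (hJ : J ^ 2 = p • J + q • (1 : Module.End ℝ V))
    (Jhat' : V × Module.Dual ℝ V → V × Module.Dual ℝ V)
    (hJhat' : ∀ σ : V × Module.Dual ℝ V,
      Jhat' σ = (-(J σ.1) + p • σ.1, g σ.1 + σ.2 ∘ₗ (J : V →ₗ[ℝ] V))) :
    ∀ σ : V × Module.Dual ℝ V, Jhat' (Jhat' σ) = p • Jhat' σ + q • σ :=
  generalized_metallic_prime_general V g J hJsym p q hJ Jhat' hJhat'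
end

section
/- Let V be a finite-dimensional real vector space, g a nondegenerate symmetric bilinear form on V, and J : V → V a g-symmetric linear map with J² = −I (a Norden structure). Define J̃ : V ⊕ V* → V ⊕ V* by J̃(X, α) := (J X, ♭_g(X) − J*(α)), and the bilinear form g̃ on V ⊕ V* by g̃(X + α, Y + β) := g(X, Y) + (1/2) g(J X, ♯_g β) + (1/2) g(♯_g α, J Y) + g(♯_g α, ♯_g β). Then for any real numbers a, b, the map J̃_{a,b} := a J̃ + b Id satisfies J̃_{a,b}² = p J̃_{a,b} + q Id with p = 2b and q = −(a² + b²), and is g̃-symmetric: g̃(J̃_{a,b} σ, τ) = g̃(σ, J̃_{a,b} τ) for all σ, τ ∈ V ⊕ V*. -/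
/-! `J̃` squares to `-Id`: on `V` this is `J² = -I`, and on `V*` the two copies of
`♭_g (J X)` cancel because `J` is `g`-symmetric. Any `t` with `t² = -1` makes `x = a t + b`
satisfy `(x - b)² = -a²`, which is the stated quadratic relation. The form `g̃` is bilinear
and `J̃` is `g̃`-self-adjoint: using `♯_g (α ∘ J) = J ♯_g α`, the weights `½` are exactly what
make the mixed terms `g(X, ♯β)` and `g(♯α, Y)` agree on both sides. Self-adjointness passes
to `a J̃ + b Id`. -/

theorem smul_add_smul_one_sq {R A : Type*} [CommRing R] [Ring A] [Algebra R A] {t : A}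
    (ht : t ^ 2 = -1) (a b : R) :
    (a • t + b • 1) ^ 2 = (2 * b) • (a • t + b • 1) + (-(a ^ 2 + b ^ 2)) • (1 : A) := by
  simp only [sq, add_mul, mul_add, mul_one, one_mul, smul_mul_assoc, mul_smul_comm] at ht ⊢
  rw [ht]
  module

theorem Module.End.apply_apply_of_sq_eq_neg_one {R M : Type*} [Ring R] [AddCommGroup M]
    [Module R M] {f : Module.End R M} (hf : f ^ 2 = -1) (x : M) : f (f x) = -x := by
  simpa [sq] using LinearMap.congr_fun hf x

open LinearMap

section NordenStructure

variable {V : Type*} [AddCommGroup V] [Module ℝ V]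
  {g : LinearMap.BilinForm ℝ V} (sharp : Module.Dual ℝ V →ₗ[ℝ] V) {J : Module.End ℝ V}

theorem flat_comp_eq_flat_apply (hJsym : ∀ X Y : V, g (J X) Y = g X (J Y)) (X : V) :
    g X ∘ₗ J = g (J X) := by
  ext Y
  exact (hJsym X Y).symm

theorem sharp_comp_eq_apply_sharp (hJsym : ∀ X Y : V, g (J X) Y = g X (J Y))
    (hsharp_flat : ∀ X : V, sharp (g X) = X)
    (hflat_sharp : ∀ α : Module.Dual ℝ V, g (sharp α) = α) (α : Module.Dual ℝ V) :
    sharp (α ∘ₗ J) = J (sharp α) := by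
  rw [← hsharp_flat (J (sharp α)), ← flat_comp_eq_flat_apply hJsym, hflat_sharp]

end NordenStructure

namespace NordenLift

variable {V : Type*} [AddCommGroup V] [Module ℝ V]
  (g : LinearMap.BilinForm ℝ V) (sharp : Module.Dual ℝ V →ₗ[ℝ] V) (J : Module.End ℝ V)

def endo : Module.End ℝ (V × Module.Dual ℝ V) :=
  (J ∘ₗ fst ℝ _ _).prod (g ∘ₗ fst ℝ _ _ - J.dualMap ∘ₗ snd ℝ _ _)

@[simp]
theorem endo_apply (σ : V × Module.Dual ℝ V) :
    endo g J σ = (J σ.1, g σ.1 - σ.2 ∘ₗ J) := rfl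

noncomputable def form : LinearMap.BilinForm ℝ (V × Module.Dual ℝ V) :=
  g.compl₁₂ (fst ℝ _ _) (fst ℝ _ _) +
    (1 / 2 : ℝ) • g.compl₁₂ (J ∘ₗ fst ℝ _ _) (sharp ∘ₗ snd ℝ _ _) +
    (1 / 2 : ℝ) • g.compl₁₂ (sharp ∘ₗ snd ℝ _ _) (J ∘ₗ fst ℝ _ _) +
    g.compl₁₂ (sharp ∘ₗ snd ℝ _ _) (sharp ∘ₗ snd ℝ _ _)

@[simp]
theorem form_apply (σ τ : V × Module.Dual ℝ V) :
    form g sharp J σ τ = g σ.1 τ.1 + (1 / 2) * g (J σ.1) (sharp τ.2) +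
        (1 / 2) * g (sharp σ.2) (J τ.1) + g (sharp σ.2) (sharp τ.2) := rfl

variable {g J}

theorem endo_sq (hJsym : ∀ X Y : V, g (J X) Y = g X (J Y)) (hJ : J ^ 2 = -1) :
    endo g J ^ 2 = -1 := by
  have hJJ := Module.End.apply_apply_of_sq_eq_neg_one hJ
  refine LinearMap.ext fun ⟨X, α⟩ => ?_
  have hα : (α ∘ₗ J) ∘ₗ J = -α := by ext Y; simp [hJJ]
  simp only [sq, Module.End.mul_apply, endo_apply, LinearMap.neg_apply, Module.End.one_apply,
    Prod.neg_mk, hJJ, LinearMap.sub_comp, flat_comp_eq_flat_apply hJsym, hα, sub_sub_cancel]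

theorem isAdjointPair_endo (hJsym : ∀ X Y : V, g (J X) Y = g X (J Y)) (hJ : J ^ 2 = -1)
    (hsharp_flat : ∀ X : V, sharp (g X) = X)
    (hflat_sharp : ∀ α : Module.Dual ℝ V, g (sharp α) = α) :
    IsAdjointPair (form g sharp J) (form g sharp J) (endo g J) (endo g J) := by
  have hJJ := Module.End.apply_apply_of_sq_eq_neg_one hJ
  rintro ⟨X, α⟩ ⟨Y, β⟩
  simp only [form_apply, endo_apply, map_sub, map_neg, LinearMap.sub_apply, LinearMap.neg_apply,
    hsharp_flat, sharp_comp_eq_apply_sharp sharp hJsym hsharp_flat hflat_sharp, hJJ]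
  simp only [hJsym, hJJ, map_neg]
  ring

end NordenLift

theorem generalized_metallic_norden_family_general
    (V : Type*) [AddCommGroup V] [Module ℝ V]
    (g : LinearMap.BilinForm ℝ V)
    (sharp : Module.Dual ℝ V →ₗ[ℝ] V)
    (hsharp_flat : ∀ X : V, sharp (g X) = X)
    (hflat_sharp : ∀ α : Module.Dual ℝ V, g (sharp α) = α)
    (J : Module.End ℝ V)
    (hJsym : ∀ X Y : V, g (J X) Y = g X (J Y))
    (hJ : J ^ 2 = -(1 : Module.End ℝ V))
    (Jtilde : V × Module.Dual ℝ V → V × Module.Dual ℝ V)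
    (hJtilde : ∀ σ : V × Module.Dual ℝ V,
      Jtilde σ = (J σ.1, g σ.1 - σ.2 ∘ₗ (J : V →ₗ[ℝ] V)))
    (gtilde : V × Module.Dual ℝ V → V × Module.Dual ℝ V → ℝ)
    (hgtilde : ∀ σ τ : V × Module.Dual ℝ V,
      gtilde σ τ = g σ.1 τ.1 + (1 / 2) * g (J σ.1) (sharp τ.2) +
        (1 / 2) * g (sharp σ.2) (J τ.1) + g (sharp σ.2) (sharp τ.2))
    (a b : ℝ)
    (Jab : V × Module.Dual ℝ V → V × Module.Dual ℝ V)
    (hJab : ∀ σ : V × Module.Dual ℝ V, Jab σ = a • Jtilde σ + b • σ) :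
    (∀ σ : V × Module.Dual ℝ V,
      Jab (Jab σ) = (2 * b) • Jab σ + (-(a ^ 2 + b ^ 2)) • σ) ∧
    (∀ σ τ : V × Module.Dual ℝ V, gtilde (Jab σ) τ = gtilde σ (Jab τ)) := by
  set T := a • NordenLift.endo g J + b • (1 : Module.End ℝ (V × Module.Dual ℝ V))
  have hJab_eq : Jab = T := funext fun σ => by simp [T, hJab, hJtilde]
  have hgtilde_eq : gtilde = fun σ τ => NordenLift.form g sharp J σ τ :=
    funext₂ fun σ τ => by simp [hgtilde]
  subst hJab_eq hgtilde_eq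
  have hT_sq : T ^ 2 = (2 * b) • T + (-(a ^ 2 + b ^ 2)) • 1 :=
    smul_add_smul_one_sq (A := Module.End ℝ (V × Module.Dual ℝ V))
      (NordenLift.endo_sq hJsym hJ) a b
  have hT_adj : IsAdjointPair (NordenLift.form g sharp J) (NordenLift.form g sharp J) T T :=
    ((NordenLift.isAdjointPair_endo sharp hJsym hJ hsharp_flat hflat_sharp).smul a).add
      (isAdjointPair_one.smul b)
  refine ⟨fun σ => ?_, hT_adj⟩
  simpa only [sq, Module.End.mul_apply, LinearMap.add_apply, LinearMap.smul_apply,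
    Module.End.one_apply] using LinearMap.congr_fun hT_sq σ

/-- If `(J, g)` is a Norden structure on a finite-dimensional `V`
(`J` `g`-symmetric, `J² = -I`, `g` nondegenerate symmetric), then for any reals
`a b`, the map `J̃_{a,b} := a J̃ + b Id` on `V ⊕ V*` satisfies
`J̃_{a,b}² = 2b J̃_{a,b} - (a² + b²) Id` and is `g̃`-symmetric, where
`J̃(X, α) = (J X, ♭_g X - J* α)` and
`g̃(X + α, Y + β) = g(X,Y) + ½ g(J X, ♯β) + ½ g(♯α, J Y) + g(♯α, ♯β)`. -/
theorem generalized_metallic_norden_family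
    (V : Type*) [AddCommGroup V] [Module ℝ V] [FiniteDimensional ℝ V]
    (g : LinearMap.BilinForm ℝ V) (hgsymm : ∀ X Y : V, g X Y = g Y X)
    (hgnd : ∀ X : V, (∀ Y : V, g X Y = 0) → X = 0)
    (sharp : Module.Dual ℝ V →ₗ[ℝ] V)
    (hsharp_flat : ∀ X : V, sharp (g X) = X)
    (hflat_sharp : ∀ α : Module.Dual ℝ V, g (sharp α) = α)
    (J : Module.End ℝ V)
    (hJsym : ∀ X Y : V, g (J X) Y = g X (J Y))
    (hJ : J ^ 2 = -(1 : Module.End ℝ V))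
    (Jtilde : V × Module.Dual ℝ V → V × Module.Dual ℝ V)
    (hJtilde : ∀ σ : V × Module.Dual ℝ V,
      Jtilde σ = (J σ.1, g σ.1 - σ.2 ∘ₗ (J : V →ₗ[ℝ] V)))
    (gtilde : V × Module.Dual ℝ V → V × Module.Dual ℝ V → ℝ)
    (hgtilde : ∀ σ τ : V × Module.Dual ℝ V,
      gtilde σ τ = g σ.1 τ.1 + (1 / 2) * g (J σ.1) (sharp τ.2) +
        (1 / 2) * g (sharp σ.2) (J τ.1) + g (sharp σ.2) (sharp τ.2))
    (a b : ℝ)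
    (Jab : V × Module.Dual ℝ V → V × Module.Dual ℝ V)
    (hJab : ∀ σ : V × Module.Dual ℝ V, Jab σ = a • Jtilde σ + b • σ) :
    (∀ σ : V × Module.Dual ℝ V,
      Jab (Jab σ) = (2 * b) • Jab σ + (-(a ^ 2 + b ^ 2)) • σ) ∧
    (∀ σ τ : V × Module.Dual ℝ V, gtilde (Jab σ) τ = gtilde σ (Jab τ)) :=
  generalized_metallic_norden_family_general V g sharp hsharp_flat hflat_sharp J hJsym hJ Jtilde
    hJtilde gtilde hgtilde a b Jab hJab
end
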